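/- Let {X(τ,σ):τ,σ∈S_0} be a biadmissible family with sup_{τ,σ∈S_0} E[X(τ,σ)] < ∞. Then for every stopping time S∈S_0, the double-stopping value function coincides with the single-stopping value function of the new reward: v(S) = u(S) a.s. -/

import Mathlib

/-!
If `τ₁, τ₂ ∈ S_S` and `θ = τ₁ ∧ τ₂`, then `X(τ₁, τ₂)` equals `X(θ, τ₂)` on the `F_θ`-set
`{τ₁ = θ}` and `X(τ₁, θ)` off it, so by the zero-one law `E_θ[X(τ₁, τ₂)] ≤ X̃(θ)`; time
consistency then gives `v(S) ≤ u(S)`.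

Conversely, `X̃(τ)` is the essential supremum of the upward directed family of the
`E_τ[X(ρ, σ)]` with `ρ, σ ∈ S_τ` and `ρ ∧ σ = τ` (pasting along `F_τ`-sets keeps it directed),
hence the a.e. increasing limit of a sequence `E_τ[X(ρₙ, σₙ)]`. The bound on `E[X]` and (H5)
put `X̃(τ)` into `Dom(E)`, and monotone convergence for `E_S`, obtained from (H1) and strict
monotonicity, gives `E_S[X̃(τ)] = lim E_S[X(ρₙ, σₙ)] ≤ v(S)`.
-/

open MeasureTheory Filter Set

noncomputable section

namespace OptMultStop

variable {Ω : Type*}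

/-- A real function is right-continuous with left limits (RCLL) on `[0, T]`. -/
def RCLLOn (f : ℝ → ℝ) (T : ℝ) : Prop :=
  (∀ t ∈ Set.Ico (0 : ℝ) T, ContinuousWithinAt f (Set.Ici t) t) ∧
    ∀ t ∈ Set.Ioc (0 : ℝ) T, ∃ l : ℝ, Filter.Tendsto f (nhdsWithin t (Set.Iio t)) (nhds l)

/-- A real function is right-continuous on `[0, T)`. -/
def RCOn (f : ℝ → ℝ) (T : ℝ) : Prop :=
  ∀ t ∈ Set.Ico (0 : ℝ) T, ContinuousWithinAt f (Set.Ici t) t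

/-- `τ` is a stopping time for `ℱ` taking values in `[s ·, T]`; for `s = S` a stopping
time this encodes membership in `S_S`. -/
def IsStopIn [m : MeasurableSpace Ω] (ℱ : Filtration ℝ m) (T : ℝ) (s τ : Ω → ℝ) : Prop :=
  IsStoppingTime ℱ (fun ω => (τ ω : WithTop ℝ)) ∧ (∀ ω, s ω ≤ τ ω) ∧ ∀ ω, τ ω ≤ T

/-- Membership in `S_0`: a stopping time with values in `[0, T]`. -/
def Stop0 [m : MeasurableSpace Ω] (ℱ : Filtration ℝ m) (T : ℝ) (τ : Ω → ℝ) : Prop :=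
  IsStopIn ℱ T (fun _ => (0 : ℝ)) τ

/-- `g` is an essential supremum of the family of random variables `s`. -/
def IsEssSupFam [MeasurableSpace Ω] (μ : Measure Ω) (s : Set (Ω → ℝ)) (g : Ω → ℝ) : Prop :=
  (∀ f ∈ s, f ≤ᵐ[μ] g) ∧ ∀ h : Ω → ℝ, (∀ f ∈ s, f ≤ᵐ[μ] h) → g ≤ᵐ[μ] h

/-- `g` is an essential infimum of the family of random variables `s`. -/
def IsEssInfFam [MeasurableSpace Ω] (μ : Measure Ω) (s : Set (Ω → ℝ)) (g : Ω → ℝ) : Prop :=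
  (∀ f ∈ s, g ≤ᵐ[μ] f) ∧ ∀ h : Ω → ℝ, (∀ f ∈ s, h ≤ᵐ[μ] f) → h ≤ᵐ[μ] g

/-- An `𝔽`-consistent nonlinear expectation `(E, Dom(E))` on the horizon `[0, T]`,
together with its conditional versions at stopping times, satisfying the domain
axioms (D1)-(D3), (A1)-(A4) at stopping times, and hypotheses (H0)-(H5). -/
structure FExp [m : MeasurableSpace Ω] (μ : Measure Ω) (T : ℝ) (ℱ : Filtration ℝ m) where
  /-- the domain `Dom(E)` -/
  Dom : Set (Ω → ℝ)
  /-- `cond τ ξ` is the conditional expectation `E_τ[ξ]` at the stopping time `τ` -/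
  cond : (Ω → ℝ) → (Ω → ℝ) → Ω → ℝ
  /-- `E0 ξ` is the (deterministic) value `E[ξ] = E_0[ξ]` -/
  E0 : (Ω → ℝ) → ℝ
  zero_mem : (fun _ => (0 : ℝ)) ∈ Dom
  one_mem : (fun _ => (1 : ℝ)) ∈ Dom
  /-- (H4): all constants belong to the domain -/
  const_mem : ∀ c : ℝ, (fun _ => c) ∈ Dom
  add_mem : ∀ {ξ η : Ω → ℝ}, ξ ∈ Dom → η ∈ Dom → ξ + η ∈ Dom
  indicator_mem : ∀ {ξ : Ω → ℝ}, ξ ∈ Dom → ∀ {A : Set Ω}, MeasurableSet A →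
    A.indicator ξ ∈ Dom
  sandwich_mem : ∀ {ξ η : Ω → ℝ}, η ∈ Dom → (∀ᵐ ω ∂μ, 0 ≤ ξ ω ∧ ξ ω ≤ η ω) → ξ ∈ Dom
  cond_mem : ∀ {τ ξ : Ω → ℝ}, Stop0 ℱ T τ → ξ ∈ Dom → 0 ≤ᵐ[μ] ξ → cond τ ξ ∈ Dom
  cond_nonneg : ∀ {τ ξ : Ω → ℝ}, Stop0 ℱ T τ → ξ ∈ Dom → 0 ≤ᵐ[μ] ξ → 0 ≤ᵐ[μ] cond τ ξ
  /-- `E_τ[ξ]` is `F_τ`-measurable -/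
  cond_adapted : ∀ {τ ξ : Ω → ℝ} (hτ : Stop0 ℱ T τ), ξ ∈ Dom → 0 ≤ᵐ[μ] ξ →
    Measurable[hτ.1.measurableSpace] (cond τ ξ)
  /-- monotonicity -/
  mono : ∀ {τ ξ η : Ω → ℝ}, Stop0 ℱ T τ → ξ ∈ Dom → 0 ≤ᵐ[μ] ξ → η ∈ Dom → 0 ≤ᵐ[μ] η →
    ξ ≤ᵐ[μ] η → cond τ ξ ≤ᵐ[μ] cond τ η
  /-- strict monotonicity -/
  strict_mono : ∀ {τ ξ η : Ω → ℝ}, Stop0 ℱ T τ → ξ ∈ Dom → 0 ≤ᵐ[μ] ξ → η ∈ Dom →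
    0 ≤ᵐ[μ] η → ξ ≤ᵐ[μ] η → cond τ ξ =ᵐ[μ] cond τ η → ξ =ᵐ[μ] η
  /-- time consistency -/
  time_consistent : ∀ {σ τ ξ : Ω → ℝ}, Stop0 ℱ T σ → Stop0 ℱ T τ → (∀ ω, σ ω ≤ τ ω) →
    ξ ∈ Dom → 0 ≤ᵐ[μ] ξ → cond σ (cond τ ξ) =ᵐ[μ] cond σ ξ
  /-- zero-one law -/
  zero_one : ∀ {τ ξ : Ω → ℝ} (hτ : Stop0 ℱ T τ), ξ ∈ Dom → 0 ≤ᵐ[μ] ξ →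
    ∀ {A : Set Ω}, MeasurableSet[hτ.1.measurableSpace] A →
    cond τ (A.indicator ξ) =ᵐ[μ] A.indicator (cond τ ξ)
  /-- translation invariance -/
  translation : ∀ {τ ξ η : Ω → ℝ} (hτ : Stop0 ℱ T τ), ξ ∈ Dom → 0 ≤ᵐ[μ] ξ → η ∈ Dom →
    0 ≤ᵐ[μ] η → Measurable[hτ.1.measurableSpace] η → cond τ (ξ + η) =ᵐ[μ] cond τ ξ + η
  /-- `F_0` is trivial: `E_0[ξ]` is the constant `E0 ξ` -/
  E0_eq : ∀ {ξ : Ω → ℝ}, ξ ∈ Dom → 0 ≤ᵐ[μ] ξ →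
    cond (fun _ => (0 : ℝ)) ξ =ᵐ[μ] fun _ => E0 ξ
  /-- the process `t ↦ E_t[ξ]` has RCLL paths -/
  rcll_paths : ∀ {ξ : Ω → ℝ}, ξ ∈ Dom → 0 ≤ᵐ[μ] ξ →
    ∀ᵐ ω ∂μ, RCLLOn (fun t => cond (fun _ => t) ξ ω) T
  /-- (H0) -/
  h0 : ∀ {A : Set Ω}, MeasurableSet A → 0 < μ A →
    Tendsto (fun n : ℕ => E0 (A.indicator fun _ => (n : ℝ))) atTop atTop
  /-- (H1) -/
  h1 : ∀ {ξ : Ω → ℝ}, ξ ∈ Dom → 0 ≤ᵐ[μ] ξ → ∀ {A : ℕ → Set Ω},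
    (∀ n, MeasurableSet (A n)) → Monotone A → (∀ᵐ ω ∂μ, ω ∈ ⋃ n, A n) →
    Tendsto (fun n => E0 ((A n).indicator ξ)) atTop (nhds (E0 ξ))
  /-- (H2) -/
  h2 : ∀ {ξ η : Ω → ℝ}, ξ ∈ Dom → 0 ≤ᵐ[μ] ξ → η ∈ Dom → 0 ≤ᵐ[μ] η →
    ∀ {A : ℕ → Set Ω}, (∀ n, MeasurableSet (A n)) → Antitone A →
    (∀ᵐ ω ∂μ, ω ∉ ⋂ n, A n) →
    Tendsto (fun n => E0 (ξ + (A n).indicator η)) atTop (nhds (E0 ξ))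
  /-- (H5) -/
  h5 : ∀ {ξ : ℕ → Ω → ℝ} {ζ : Ω → ℝ}, (∀ n, ξ n ∈ Dom) → (∀ n, 0 ≤ᵐ[μ] ξ n) →
    (∀ᵐ ω ∂μ, Tendsto (fun n => ξ n ω) atTop (nhds (ζ ω))) →
    (∃ C : ℝ, ∃ᶠ n in atTop, E0 (ξ n) ≤ C) → ζ ∈ Dom

variable [m : MeasurableSpace Ω] {μ : Measure Ω} {T : ℝ} {ℱ : Filtration ℝ m}

/-- (H6): sub-additivity. -/
def FExp.Subadditive (𝔈 : FExp μ T ℱ) : Prop :=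
  ∀ ⦃τ ξ η : Ω → ℝ⦄, Stop0 ℱ T τ → ξ ∈ 𝔈.Dom → 0 ≤ᵐ[μ] ξ → η ∈ 𝔈.Dom → 0 ≤ᵐ[μ] η →
    𝔈.cond τ (ξ + η) ≤ᵐ[μ] 𝔈.cond τ ξ + 𝔈.cond τ η

/-- (H7): positive homogeneity. -/
def FExp.PosHom (𝔈 : FExp μ T ℱ) : Prop :=
  ∀ ⦃τ ξ : Ω → ℝ⦄ (l : ℝ), 0 ≤ l → Stop0 ℱ T τ → ξ ∈ 𝔈.Dom → 0 ≤ᵐ[μ] ξ →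
    𝔈.cond τ (fun ω => l * ξ ω) =ᵐ[μ] fun ω => l * 𝔈.cond τ ξ ω

/-- Admissible family of rewards indexed by stopping times. -/
def Admissible (𝔈 : FExp μ T ℱ) (X : (Ω → ℝ) → Ω → ℝ) : Prop :=
  (∀ τ : Ω → ℝ, ∀ hτ : Stop0 ℱ T τ, X τ ∈ 𝔈.Dom ∧ 0 ≤ᵐ[μ] X τ ∧
      Measurable[hτ.1.measurableSpace] (X τ)) ∧
    ∀ τ σ : Ω → ℝ, Stop0 ℱ T τ → Stop0 ℱ T σ →
      ∀ᵐ ω ∂μ, τ ω = σ ω → X τ ω = X σ ω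

/-- `sup_{τ ∈ S_0} E[X(τ)] < ∞`. -/
def BddRewardE0 (𝔈 : FExp μ T ℱ) (X : (Ω → ℝ) → Ω → ℝ) : Prop :=
  ∃ C : ℝ, ∀ τ : Ω → ℝ, Stop0 ℱ T τ → 𝔈.E0 (X τ) ≤ C

/-- `v` is the value function family of the single stopping problem for the reward `X`:
`v(S) = esssup_{τ ∈ S_S} E_S[X(τ)]`. -/
def IsValueFam (𝔈 : FExp μ T ℱ) (X v : (Ω → ℝ) → Ω → ℝ) : Prop :=
  ∀ S : Ω → ℝ, Stop0 ℱ T S →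
    IsEssSupFam μ {g | ∃ τ : Ω → ℝ, IsStopIn ℱ T S τ ∧ g = 𝔈.cond S (X τ)} (v S)

/-- An `E`-supermartingale system. -/
def SupermartSys (𝔈 : FExp μ T ℱ) (h : (Ω → ℝ) → Ω → ℝ) : Prop :=
  (∀ τ : Ω → ℝ, ∀ hτ : Stop0 ℱ T τ, h τ ∈ 𝔈.Dom ∧ 0 ≤ᵐ[μ] h τ ∧
      Measurable[hτ.1.measurableSpace] (h τ)) ∧
    ∀ τ σ : Ω → ℝ, Stop0 ℱ T τ → Stop0 ℱ T σ → (∀ᵐ ω ∂μ, τ ω ≤ σ ω) →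
      𝔈.cond τ (h σ) ≤ᵐ[μ] h τ

/-- Right-continuity along stopping times in `E`-expectation (RCE). -/
def RCE (𝔈 : FExp μ T ℱ) (X : (Ω → ℝ) → Ω → ℝ) : Prop :=
  ∀ τ : Ω → ℝ, Stop0 ℱ T τ → ∀ τs : ℕ → Ω → ℝ, (∀ n, Stop0 ℱ T (τs n)) →
    (∀ᵐ ω ∂μ, Antitone (fun n => τs n ω) ∧
      Tendsto (fun n => τs n ω) atTop (nhds (τ ω))) →
    Tendsto (fun n => 𝔈.E0 (X (τs n))) atTop (nhds (𝔈.E0 (X τ)))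

/-- Left-continuity along stopping times in `E`-expectation (LCE). -/
def LCE (𝔈 : FExp μ T ℱ) (X : (Ω → ℝ) → Ω → ℝ) : Prop :=
  ∀ τ : Ω → ℝ, Stop0 ℱ T τ → ∀ τs : ℕ → Ω → ℝ, (∀ n, Stop0 ℱ T (τs n)) →
    (∀ᵐ ω ∂μ, Monotone (fun n => τs n ω) ∧
      Tendsto (fun n => τs n ω) atTop (nhds (τ ω))) →
    Tendsto (fun n => 𝔈.E0 (X (τs n))) atTop (nhds (𝔈.E0 (X τ)))

/-- Continuity along stopping times in `E`-expectation (CE). -/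
def CE (𝔈 : FExp μ T ℱ) (X : (Ω → ℝ) → Ω → ℝ) : Prop :=
  RCE 𝔈 X ∧ LCE 𝔈 X

/-- Right-continuity along stopping times (RC): a.s. pointwise convergence. -/
def RCfam (𝔈 : FExp μ T ℱ) (X : (Ω → ℝ) → Ω → ℝ) : Prop :=
  ∀ τ : Ω → ℝ, Stop0 ℱ T τ → ∀ τs : ℕ → Ω → ℝ, (∀ n, Stop0 ℱ T (τs n)) →
    (∀ᵐ ω ∂μ, Antitone (fun n => τs n ω) ∧
      Tendsto (fun n => τs n ω) atTop (nhds (τ ω))) →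
    ∀ᵐ ω ∂μ, Tendsto (fun n => X (τs n) ω) atTop (nhds (X τ ω))

/-- Biadmissible family of rewards indexed by pairs of stopping times. -/
def Biadmissible (𝔈 : FExp μ T ℱ) (X : (Ω → ℝ) → (Ω → ℝ) → Ω → ℝ) : Prop :=
  (∀ τ σ : Ω → ℝ, ∀ hτ : Stop0 ℱ T τ, ∀ hσ : Stop0 ℱ T σ,
      X τ σ ∈ 𝔈.Dom ∧ 0 ≤ᵐ[μ] X τ σ ∧
      Measurable[(hτ.1.max hσ.1).measurableSpace] (X τ σ)) ∧
    ∀ τ σ τ' σ' : Ω → ℝ, Stop0 ℱ T τ → Stop0 ℱ T σ → Stop0 ℱ T τ' → Stop0 ℱ T σ' →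
      ∀ᵐ ω ∂μ, τ ω = τ' ω → σ ω = σ' ω → X τ σ ω = X τ' σ' ω

/-- `sup_{τ,σ ∈ S_0} E[X(τ,σ)] < ∞`. -/
def BddReward2E0 (𝔈 : FExp μ T ℱ) (X : (Ω → ℝ) → (Ω → ℝ) → Ω → ℝ) : Prop :=
  ∃ C : ℝ, ∀ τ σ : Ω → ℝ, Stop0 ℱ T τ → Stop0 ℱ T σ → 𝔈.E0 (X τ σ) ≤ C

/-- `v` is the value function family of the double stopping problem:
`v(S) = esssup_{τ₁,τ₂ ∈ S_S} E_S[X(τ₁,τ₂)]`. -/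
def IsValueFam2 (𝔈 : FExp μ T ℱ) (X : (Ω → ℝ) → (Ω → ℝ) → Ω → ℝ)
    (v : (Ω → ℝ) → Ω → ℝ) : Prop :=
  ∀ S : Ω → ℝ, Stop0 ℱ T S →
    IsEssSupFam μ
      {g | ∃ τ₁ τ₂ : Ω → ℝ, IsStopIn ℱ T S τ₁ ∧ IsStopIn ℱ T S τ₂ ∧
        g = 𝔈.cond S (X τ₁ τ₂)} (v S)

/-- `u₁(θ) = esssup_{τ₁ ∈ S_θ} E_θ[X(τ₁, θ)]`. -/
def IsU1 (𝔈 : FExp μ T ℱ) (X : (Ω → ℝ) → (Ω → ℝ) → Ω → ℝ) (u₁ : (Ω → ℝ) → Ω → ℝ) : Prop :=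
  ∀ θ : Ω → ℝ, Stop0 ℱ T θ →
    IsEssSupFam μ {g | ∃ τ : Ω → ℝ, IsStopIn ℱ T θ τ ∧ g = 𝔈.cond θ (X τ θ)} (u₁ θ)

/-- `u₂(θ) = esssup_{τ₂ ∈ S_θ} E_θ[X(θ, τ₂)]`. -/
def IsU2 (𝔈 : FExp μ T ℱ) (X : (Ω → ℝ) → (Ω → ℝ) → Ω → ℝ) (u₂ : (Ω → ℝ) → Ω → ℝ) : Prop :=
  ∀ θ : Ω → ℝ, Stop0 ℱ T θ →
    IsEssSupFam μ {g | ∃ τ : Ω → ℝ, IsStopIn ℱ T θ τ ∧ g = 𝔈.cond θ (X θ τ)} (u₂ θ)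

/-- Uniform right-continuity of a biadmissible family along stopping times in
`ℰ`-expectation (URCℰ). -/
def URCE2 (ℰ : FExp μ T ℱ) (X : (Ω → ℝ) → (Ω → ℝ) → Ω → ℝ) : Prop :=
  ∀ σ : Ω → ℝ, Stop0 ℱ T σ → ∀ σs : ℕ → Ω → ℝ, (∀ n, Stop0 ℱ T (σs n)) →
    (∀ᵐ ω ∂μ, Antitone (fun n => σs n ω) ∧
      Tendsto (fun n => σs n ω) atTop (nhds (σ ω))) →
    ∀ ε : ℝ, 0 < ε → ∃ N : ℕ, ∀ n ≥ N, ∀ τ : Ω → ℝ, Stop0 ℱ T τ →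
      ℰ.E0 (fun ω => |X τ σ ω - X τ (σs n) ω|) ≤ ε ∧
      ℰ.E0 (fun ω => |X σ τ ω - X (σs n) τ ω|) ≤ ε

/-- Uniform left-continuity of a biadmissible family along stopping times in
`ℰ`-expectation (ULCℰ). -/
def ULCE2 (ℰ : FExp μ T ℱ) (X : (Ω → ℝ) → (Ω → ℝ) → Ω → ℝ) : Prop :=
  ∀ σ : Ω → ℝ, Stop0 ℱ T σ → ∀ σs : ℕ → Ω → ℝ, (∀ n, Stop0 ℱ T (σs n)) →
    (∀ᵐ ω ∂μ, Monotone (fun n => σs n ω) ∧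
      Tendsto (fun n => σs n ω) atTop (nhds (σ ω))) →
    ∀ ε : ℝ, 0 < ε → ∃ N : ℕ, ∀ n ≥ N, ∀ τ : Ω → ℝ, Stop0 ℱ T τ →
      ℰ.E0 (fun ω => |X τ σ ω - X τ (σs n) ω|) ≤ ε ∧
      ℰ.E0 (fun ω => |X σ τ ω - X (σs n) τ ω|) ≤ ε

/-- Uniform continuity (UCℰ) of a biadmissible family. -/
def UCE2 (ℰ : FExp μ T ℱ) (X : (Ω → ℝ) → (Ω → ℝ) → Ω → ℝ) : Prop :=
  URCE2 ℰ X ∧ ULCE2 ℰ X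

/-- `(E, Dom(E))` is dominated by `(Ẽ, Dom(Ẽ))`. -/
def Dominated (𝔈 𝔉 : FExp μ T ℱ) : Prop :=
  𝔈.Dom ⊆ 𝔉.Dom ∧
    ∀ τ : Ω → ℝ, Stop0 ℱ T τ → ∀ ξ η : Ω → ℝ, ξ ∈ 𝔈.Dom → η ∈ 𝔈.Dom →
      ∀ᵐ ω ∂μ, 𝔈.cond τ (ξ + η) ω - 𝔈.cond τ η ω ≤ 𝔉.cond τ ξ ω

/-- The filtration contains all `μ`-null sets (part of the usual conditions). -/
def CompleteFiltration (μ : Measure Ω) (ℱ : Filtration ℝ m) : Prop :=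
  ∀ s : Set Ω, μ s = 0 → ∀ t : ℝ, MeasurableSet[ℱ t] s

/-- The filtration is right-continuous (part of the usual conditions). -/
def RightContinuousFiltration (ℱ : Filtration ℝ m) : Prop :=
  ∀ t : ℝ, (ℱ t : MeasurableSpace Ω) = ⨅ u ∈ Set.Ioi t, ℱ u

/-- A `d`-tuple of stopping times, all in `S_s`. -/
def StopVec (ℱ : Filtration ℝ m) (T : ℝ) (s : Ω → ℝ) {d : ℕ} (τ : Fin d → Ω → ℝ) : Prop :=
  ∀ i, IsStopIn ℱ T s (τ i)

/-- A `d`-admissible family of rewards. -/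
def DAdmissible (𝔈 : FExp μ T ℱ) {d : ℕ} (X : (Fin d → Ω → ℝ) → Ω → ℝ) : Prop :=
  (∀ τ : Fin d → Ω → ℝ, StopVec ℱ T (fun _ => (0 : ℝ)) τ →
      X τ ∈ 𝔈.Dom ∧ 0 ≤ᵐ[μ] X τ ∧
      ∀ h : IsStoppingTime ℱ fun ω => (((⨆ i, τ i ω : ℝ)) : WithTop ℝ),
        Measurable[h.measurableSpace] (X τ)) ∧
    ∀ τ σ : Fin d → Ω → ℝ, StopVec ℱ T (fun _ => (0 : ℝ)) τ →
      StopVec ℱ T (fun _ => (0 : ℝ)) σ →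
      ∀ᵐ ω ∂μ, (∀ i, τ i ω = σ i ω) → X τ ω = X σ ω

/-- `sup_{τ ∈ S_0^d} E[X(τ)] < ∞`. -/
def BddRewardDE0 (𝔈 : FExp μ T ℱ) {d : ℕ} (X : (Fin d → Ω → ℝ) → Ω → ℝ) : Prop :=
  ∃ C : ℝ, ∀ τ : Fin d → Ω → ℝ, StopVec ℱ T (fun _ => (0 : ℝ)) τ → 𝔈.E0 (X τ) ≤ C

/-- `v` is the value function family of the `d`-stopping problem:
`v(S) = esssup_{τ ∈ S_S^d} E_S[X(τ)]`. -/
def IsValueFamD (𝔈 : FExp μ T ℱ) {d : ℕ} (X : (Fin d → Ω → ℝ) → Ω → ℝ)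
    (v : (Ω → ℝ) → Ω → ℝ) : Prop :=
  ∀ S : Ω → ℝ, Stop0 ℱ T S →
    IsEssSupFam μ
      {g | ∃ τ : Fin d → Ω → ℝ, StopVec ℱ T S τ ∧ g = 𝔈.cond S (X τ)} (v S)

/-- `u^{(i)}(θ) = esssup_{τ ∈ S_θ^{d-1}} E_θ[X^{(i)}(τ, θ)]`, where `X^{(i)}(τ, θ)`
inserts `θ` in the `i`-th slot. -/
def IsUi (𝔈 : FExp μ T ℱ) {d : ℕ} (X : (Fin (d + 1) → Ω → ℝ) → Ω → ℝ)
    (ui : Fin (d + 1) → (Ω → ℝ) → Ω → ℝ) : Prop :=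
  ∀ i : Fin (d + 1), ∀ θ : Ω → ℝ, Stop0 ℱ T θ →
    IsEssSupFam μ
      {g | ∃ τ : Fin d → Ω → ℝ, StopVec ℱ T θ τ ∧ g = 𝔈.cond θ (X (i.insertNth θ τ))}
      (ui i θ)

/-- Uniform continuity (UCE) of a `d`-admissible family along monotone sequences of
stopping times. -/
def UCED (𝔈 : FExp μ T ℱ) {d : ℕ} (X : (Fin (d + 1) → Ω → ℝ) → Ω → ℝ) : Prop :=
  ∀ i : Fin (d + 1), ∀ S : Ω → ℝ, Stop0 ℱ T S → ∀ Ss : ℕ → Ω → ℝ,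
    (∀ n, Stop0 ℱ T (Ss n)) →
    ((∀ᵐ ω ∂μ, Monotone fun n => Ss n ω) ∨ (∀ᵐ ω ∂μ, Antitone fun n => Ss n ω)) →
    (∀ᵐ ω ∂μ, Tendsto (fun n => Ss n ω) atTop (nhds (S ω))) →
    ∀ ε : ℝ, 0 < ε → ∃ N : ℕ, ∀ n ≥ N, ∀ θ : Fin d → Ω → ℝ,
      StopVec ℱ T (fun _ => (0 : ℝ)) θ →
      𝔈.E0 (fun ω => |X (i.insertNth (Ss n) θ) ω - X (i.insertNth S θ) ω|) ≤ ε

lemma IsStopIn.trans {s S τ : Ω → ℝ} (hS : IsStopIn ℱ T s S) (hτ : IsStopIn ℱ T S τ) :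
    IsStopIn ℱ T s τ :=
  ⟨hτ.1, fun ω => (hS.2.1 ω).trans (hτ.2.1 ω), hτ.2.2⟩

lemma Stop0.isStopIn_self {τ : Ω → ℝ} (hτ : Stop0 ℱ T τ) : IsStopIn ℱ T τ τ :=
  ⟨hτ.1, fun _ => le_rfl, hτ.2.2⟩

lemma stop0_const_zero (hT : 0 ≤ T) : Stop0 ℱ T (fun _ => (0 : ℝ)) :=
  ⟨isStoppingTime_const ℱ 0, fun _ => le_rfl, fun _ => hT⟩

lemma IsStopIn.min {S τ₁ τ₂ : Ω → ℝ} (h₁ : IsStopIn ℱ T S τ₁) (h₂ : IsStopIn ℱ T S τ₂) :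
    IsStopIn ℱ T S fun ω => min (τ₁ ω) (τ₂ ω) :=
  ⟨h₁.1.min h₂.1, fun ω => le_min (h₁.2.1 ω) (h₂.2.1 ω),
    fun ω => (min_le_left _ _).trans (h₁.2.2 ω)⟩

theorem isStoppingTime_piecewise {ι : Type*} [Preorder ι] {f : Filtration ι m}
    {τ ρ σ : Ω → WithTop ι} (hτ : IsStoppingTime f τ) (hρ : IsStoppingTime f ρ)
    (hσ : IsStoppingTime f σ) (hτρ : τ ≤ ρ) (hτσ : τ ≤ σ) {s : Set Ω} [DecidablePred (· ∈ s)]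
    (hs : MeasurableSet[hτ.measurableSpace] s) : IsStoppingTime f (s.piecewise ρ σ) := by
  intro i
  have : {ω | s.piecewise ρ σ ω ≤ i} =
      s ∩ {ω | τ ω ≤ i} ∩ {ω | ρ ω ≤ i} ∪ sᶜ ∩ {ω | τ ω ≤ i} ∩ {ω | σ ω ≤ i} := by
    ext ω
    by_cases hω : ω ∈ s
    · simpa [hω] using fun h => (hτρ ω).trans h
    · simpa [hω] using fun h => (hτσ ω).trans h
  rw [this]
  exact ((hs.2 i).inter (hρ i)).union ((hs.compl.2 i).inter (hσ i))

lemma IsStopIn.piecewise {τ ρ σ : Ω → ℝ} (hτ : IsStoppingTime ℱ fun ω => (τ ω : WithTop ℝ))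
    (hρ : IsStopIn ℱ T τ ρ) (hσ : IsStopIn ℱ T τ σ) {A : Set Ω} [DecidablePred (· ∈ A)]
    (hA : MeasurableSet[hτ.measurableSpace] A) : IsStopIn ℱ T τ (A.piecewise ρ σ) := by
  refine ⟨?_, fun ω => ?_, fun ω => ?_⟩
  · have := isStoppingTime_piecewise hτ hρ.1 hσ.1 (fun ω => WithTop.coe_le_coe.2 (hρ.2.1 ω))
      (fun ω => WithTop.coe_le_coe.2 (hσ.2.1 ω)) hA
    convert this using 1
    ext ω
    by_cases hω : ω ∈ A <;> simp [hω]
  · by_cases hω : ω ∈ A <;> simp [hω, hρ.2.1 ω, hσ.2.1 ω]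
  · by_cases hω : ω ∈ A <;> simp [hω, hρ.2.2 ω, hσ.2.2 ω]

open scoped Topology

lemma indicator_ae_nonneg {ξ : Ω → ℝ} (hξ0 : 0 ≤ᵐ[μ] ξ) (A : Set Ω) :
    0 ≤ᵐ[μ] A.indicator ξ := by
  filter_upwards [hξ0] with ω h using Set.indicator_apply_nonneg fun _ => h

namespace FExp

variable (𝔈 : FExp μ T ℱ)

lemma cond_congr {τ ξ η : Ω → ℝ} (hτ : Stop0 ℱ T τ) (hξ : ξ ∈ 𝔈.Dom) (hξ0 : 0 ≤ᵐ[μ] ξ)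
    (hη : η ∈ 𝔈.Dom) (hη0 : 0 ≤ᵐ[μ] η) (h : ξ =ᵐ[μ] η) : 𝔈.cond τ ξ =ᵐ[μ] 𝔈.cond τ η :=
  (𝔈.mono hτ hξ hξ0 hη hη0 h.le).antisymm (𝔈.mono hτ hη hη0 hξ hξ0 h.symm.le)

lemma cond_ae_eq_on {τ ξ η : Ω → ℝ} (hτ : Stop0 ℱ T τ) {A : Set Ω}
    (hA : MeasurableSet[hτ.1.measurableSpace] A) (hξ : ξ ∈ 𝔈.Dom) (hξ0 : 0 ≤ᵐ[μ] ξ)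
    (hη : η ∈ 𝔈.Dom) (hη0 : 0 ≤ᵐ[μ] η) (h : ∀ᵐ ω ∂μ, ω ∈ A → ξ ω = η ω) :
    ∀ᵐ ω ∂μ, ω ∈ A → 𝔈.cond τ ξ ω = 𝔈.cond τ η ω := by
  have hAm : MeasurableSet A := hτ.1.measurableSpace_le _ hA
  have hind : A.indicator ξ =ᵐ[μ] A.indicator η := by
    filter_upwards [h] with ω h
    by_cases hω : ω ∈ A <;> simp [hω, h]
  have hcond := (𝔈.zero_one hτ hξ hξ0 hA).symm.trans <|
    (𝔈.cond_congr hτ (𝔈.indicator_mem hξ hAm) (indicator_ae_nonneg hξ0 A)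
      (𝔈.indicator_mem hη hAm) (indicator_ae_nonneg hη0 A) hind).trans (𝔈.zero_one hτ hη hη0 hA)
  filter_upwards [hcond] with ω h hω
  simpa [hω] using h

lemma measurable_cond {τ ξ : Ω → ℝ} (hτ : Stop0 ℱ T τ) (hξ : ξ ∈ 𝔈.Dom) (hξ0 : 0 ≤ᵐ[μ] ξ) :
    Measurable (𝔈.cond τ ξ) :=
  (𝔈.cond_adapted hτ hξ hξ0).mono hτ.1.measurableSpace_le le_rfl

variable [NeZero μ]

lemma E0_mono (hT : 0 ≤ T) {ξ η : Ω → ℝ} (hξ : ξ ∈ 𝔈.Dom) (hξ0 : 0 ≤ᵐ[μ] ξ)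
    (hη : η ∈ 𝔈.Dom) (hη0 : 0 ≤ᵐ[μ] η) (h : ξ ≤ᵐ[μ] η) : 𝔈.E0 ξ ≤ 𝔈.E0 η := by
  refine (eventually_const (f := ae μ)).mp ?_
  filter_upwards [𝔈.mono (stop0_const_zero hT) hξ hξ0 hη hη0 h, 𝔈.E0_eq hξ hξ0,
    𝔈.E0_eq hη hη0] with ω hle hξω hηω
  rwa [← hξω, ← hηω]

lemma E0_cond (hT : 0 ≤ T) {τ ξ : Ω → ℝ} (hτ : Stop0 ℱ T τ) (hξ : ξ ∈ 𝔈.Dom)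
    (hξ0 : 0 ≤ᵐ[μ] ξ) : 𝔈.E0 (𝔈.cond τ ξ) = 𝔈.E0 ξ := by
  refine (eventually_const (f := ae μ)).mp ?_
  filter_upwards [𝔈.time_consistent (stop0_const_zero hT) hτ hτ.2.1 hξ hξ0,
    𝔈.E0_eq (𝔈.cond_mem hτ hξ hξ0) (𝔈.cond_nonneg hτ hξ hξ0), 𝔈.E0_eq hξ hξ0]
    with ω htc h₁ h₂
  rw [← h₁, htc, h₂]

lemma E0_add_const (hT : 0 ≤ T) {ξ : Ω → ℝ} (hξ : ξ ∈ 𝔈.Dom) (hξ0 : 0 ≤ᵐ[μ] ξ) {c : ℝ}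
    (hc : 0 ≤ c) : 𝔈.E0 (ξ + fun _ => c) = 𝔈.E0 ξ + c := by
  have hc0 : 0 ≤ᵐ[μ] fun _ : Ω => c := .of_forall fun _ => hc
  have hsum0 : 0 ≤ᵐ[μ] ξ + fun _ => c := by
    filter_upwards [hξ0] with ω h using add_nonneg h hc
  refine (eventually_const (f := ae μ)).mp ?_
  filter_upwards [𝔈.translation (stop0_const_zero hT) hξ hξ0 (𝔈.const_mem c) hc0 measurable_const,
    𝔈.E0_eq (𝔈.add_mem hξ (𝔈.const_mem c)) hsum0, 𝔈.E0_eq hξ hξ0] with ω htr h₁ h₂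
  rw [← h₁, htr, Pi.add_apply, h₂]

lemma E0_le_of_forall_E0_le (hT : 0 ≤ T) {ξs : ℕ → Ω → ℝ} {ξ : Ω → ℝ}
    (hdom : ∀ n, ξs n ∈ 𝔈.Dom) (hnn : ∀ n, 0 ≤ᵐ[μ] ξs n) (hmeas : ∀ n, Measurable (ξs n))
    (hξ : ξ ∈ 𝔈.Dom) (hξ0 : 0 ≤ᵐ[μ] ξ)
    (hconv : ∀ᵐ ω ∂μ, Monotone (fun n => ξs n ω) ∧ Tendsto (fun n => ξs n ω) atTop (𝓝 (ξ ω)))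
    {l : ℝ} (hl : ∀ n, 𝔈.E0 (ξs n) ≤ l) : 𝔈.E0 ξ ≤ l := by
  have hξm : AEMeasurable ξ μ := aemeasurable_of_tendsto_metrizable_ae'
    (fun n => (hmeas n).aemeasurable) (hconv.mono fun _ h => h.2)
  refine le_of_forall_pos_le_add fun ε hε => ?_
  -- (H1) along the increasing sets where `ξ ≤ ξs k + ε` for some `k ≤ n`
  set A : ℕ → Set Ω := accumulate fun k => {ω | hξm.mk ξ ω ≤ ξs k ω + ε}
  have hA : ∀ n, MeasurableSet (A n) := fun n => MeasurableSet.biUnion (to_countable _)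
    fun k _ => measurableSet_le hξm.measurable_mk ((hmeas k).add_const ε)
  have hAexh : ∀ᵐ ω ∂μ, ω ∈ ⋃ n, A n := by
    rw [iUnion_accumulate]
    filter_upwards [hconv, hξm.ae_eq_mk] with ω h hmk
    obtain ⟨n, hn⟩ := (h.2.eventually (eventually_gt_nhds (sub_lt_self (ξ ω) hε))).exists
    exact mem_iUnion.2 ⟨n, by simp only [mem_ofPred_eq, ← hmk]; linarith⟩
  refine le_of_tendsto (𝔈.h1 hξ hξ0 hA monotone_accumulate hAexh) (.of_forall fun n => ?_)
  have hle : (A n).indicator ξ ≤ᵐ[μ] ξs n + fun _ => ε := by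
    filter_upwards [hconv, hξm.ae_eq_mk, hnn n] with ω h hmk h0
    by_cases hω : ω ∈ A n
    · obtain ⟨k, hk, hkω⟩ := mem_accumulate.1 hω
      rw [indicator_of_mem hω, hmk]
      exact hkω.trans (add_le_add_left (h.1 hk) ε)
    · rw [indicator_of_notMem hω]
      exact add_nonneg h0 hε.le
  have hsum0 : 0 ≤ᵐ[μ] ξs n + fun _ => ε := by
    filter_upwards [hnn n] with ω h using add_nonneg h hε.le
  calc 𝔈.E0 ((A n).indicator ξ) ≤ 𝔈.E0 (ξs n + fun _ => ε) :=
        𝔈.E0_mono hT (𝔈.indicator_mem hξ (hA n)) (indicator_ae_nonneg hξ0 _)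
          (𝔈.add_mem (hdom n) (𝔈.const_mem ε)) hsum0 hle
    _ = 𝔈.E0 (ξs n) + ε := 𝔈.E0_add_const hT (hdom n) (hnn n) hε.le
    _ ≤ l + ε := by linarith [hl n]

lemma E0_tendsto_of_monotone (hT : 0 ≤ T) {ξs : ℕ → Ω → ℝ} {ξ : Ω → ℝ}
    (hdom : ∀ n, ξs n ∈ 𝔈.Dom) (hnn : ∀ n, 0 ≤ᵐ[μ] ξs n) (hmeas : ∀ n, Measurable (ξs n))
    (hξ : ξ ∈ 𝔈.Dom) (hξ0 : 0 ≤ᵐ[μ] ξ)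
    (hconv : ∀ᵐ ω ∂μ, Monotone (fun n => ξs n ω) ∧ Tendsto (fun n => ξs n ω) atTop (𝓝 (ξ ω))) :
    Tendsto (fun n => 𝔈.E0 (ξs n)) atTop (𝓝 (𝔈.E0 ξ)) := by
  have hle : ∀ n, 𝔈.E0 (ξs n) ≤ 𝔈.E0 ξ := fun n => 𝔈.E0_mono hT (hdom n) (hnn n) hξ hξ0 <| by
    filter_upwards [hconv] with ω h using h.1.ge_of_tendsto h.2 n
  have hmono : Monotone fun n => 𝔈.E0 (ξs n) := monotone_nat_of_le_succ fun n =>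
    𝔈.E0_mono hT (hdom n) (hnn n) (hdom (n + 1)) (hnn (n + 1)) <| by
      filter_upwards [hconv] with ω h using h.1 n.le_succ
  have hbdd : BddAbove (range fun n => 𝔈.E0 (ξs n)) := ⟨_, forall_mem_range.2 hle⟩
  convert tendsto_atTop_ciSup hmono hbdd
  exact le_antisymm (𝔈.E0_le_of_forall_E0_le hT hdom hnn hmeas hξ hξ0 hconv (le_ciSup hbdd))
    (ciSup_le hle)

lemma cond_tendsto_of_monotone (hT : 0 ≤ T) {S : Ω → ℝ} (hS : Stop0 ℱ T S)
    {ξs : ℕ → Ω → ℝ} {ξ : Ω → ℝ}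
    (hdom : ∀ n, ξs n ∈ 𝔈.Dom) (hnn : ∀ n, 0 ≤ᵐ[μ] ξs n) (hmeas : ∀ n, Measurable (ξs n))
    (hξ : ξ ∈ 𝔈.Dom) (hξ0 : 0 ≤ᵐ[μ] ξ)
    (hconv : ∀ᵐ ω ∂μ, Monotone (fun n => ξs n ω) ∧ Tendsto (fun n => ξs n ω) atTop (𝓝 (ξ ω))) :
    ∀ᵐ ω ∂μ, Tendsto (fun n => 𝔈.cond S (ξs n) ω) atTop (𝓝 (𝔈.cond S ξ ω)) := by
  set ζ : ℕ → Ω → ℝ := fun n => 𝔈.cond S (ξs n)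
  have hζ : ∀ n, ζ n ∈ 𝔈.Dom := fun n => 𝔈.cond_mem hS (hdom n) (hnn n)
  have hζ0 : ∀ n, 0 ≤ᵐ[μ] ζ n := fun n => 𝔈.cond_nonneg hS (hdom n) (hnn n)
  have hζm : ∀ n, Measurable (ζ n) := fun n => 𝔈.measurable_cond hS (hdom n) (hnn n)
  have hζstep : ∀ᵐ ω ∂μ, ∀ n, ζ n ω ≤ ζ (n + 1) ω := ae_all_iff.2 fun n =>
    𝔈.mono hS (hdom n) (hnn n) (hdom (n + 1)) (hnn (n + 1)) <| by
      filter_upwards [hconv] with ω h using h.1 n.le_succ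
  have hζle : ∀ᵐ ω ∂μ, ∀ n, ζ n ω ≤ 𝔈.cond S ξ ω := ae_all_iff.2 fun n =>
    𝔈.mono hS (hdom n) (hnn n) hξ hξ0 <| by
      filter_upwards [hconv] with ω h using h.1.ge_of_tendsto h.2 n
  set L : Ω → ℝ := fun ω => ⨆ n, ζ n ω
  have hζL : ∀ᵐ ω ∂μ, Monotone (fun n => ζ n ω) ∧ Tendsto (fun n => ζ n ω) atTop (𝓝 (L ω)) := by
    filter_upwards [hζstep, hζle] with ω h₁ h₂
    exact ⟨monotone_nat_of_le_succ h₁,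
      tendsto_atTop_ciSup (monotone_nat_of_le_succ h₁) ⟨_, forall_mem_range.2 h₂⟩⟩
  have hLle : L ≤ᵐ[μ] 𝔈.cond S ξ := by
    filter_upwards [hζle] with ω h using ciSup_le h
  have hL0 : 0 ≤ᵐ[μ] L := by
    filter_upwards [hζL, hζ0 0] with ω h h0 using h0.trans (h.1.ge_of_tendsto h.2 0)
  have hL : L ∈ 𝔈.Dom := 𝔈.sandwich_mem (𝔈.cond_mem hS hξ hξ0) <| by
    filter_upwards [hL0, hLle] with ω h₁ h₂ using ⟨h₁, h₂⟩
  have hE0 : 𝔈.E0 L = 𝔈.E0 (𝔈.cond S ξ) := by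
    rw [𝔈.E0_cond hT hS hξ hξ0]
    refine tendsto_nhds_unique ?_ (𝔈.E0_tendsto_of_monotone hT hdom hnn hmeas hξ hξ0 hconv)
    exact (𝔈.E0_tendsto_of_monotone hT hζ hζ0 hζm hL hL0 hζL).congr fun n =>
      𝔈.E0_cond hT hS (hdom n) (hnn n)
  -- `L ≤ E_S[ξ]` with equal `E`-expectations, so strict monotonicity identifies them
  have hLeq : L =ᵐ[μ] 𝔈.cond S ξ := by
    refine 𝔈.strict_mono (stop0_const_zero hT) hL hL0 (𝔈.cond_mem hS hξ hξ0)
      (𝔈.cond_nonneg hS hξ hξ0) hLle ?_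
    filter_upwards [𝔈.E0_eq hL hL0, 𝔈.E0_eq (𝔈.cond_mem hS hξ hξ0) (𝔈.cond_nonneg hS hξ hξ0)]
      with ω h₁ h₂
    rw [h₁, h₂, hE0]
  filter_upwards [hζL, hLeq] with ω h he
  exact he ▸ h.2

end FExp

lemma _root_.DirectedOn.exists_seq_ge {α : Type*} {r : α → α → Prop} {s : Set α}
    (hdir : DirectedOn r s) {g : ℕ → α} (hg : ∀ n, g n ∈ s) :
    ∃ F : ℕ → α, (∀ n, F n ∈ s) ∧ (∀ n, r (F n) (F (n + 1))) ∧ ∀ n, r (g n) (F n) := by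
  choose! up hup hl hr using hdir
  let F : ℕ → α := fun n => Nat.rec (up (g 0) (g 0)) (fun n Fn => up Fn (g (n + 1))) n
  have hF : ∀ n, F n ∈ s := by
    intro n
    induction n with
    | zero => exact hup _ (hg 0) _ (hg 0)
    | succ n ih => exact hup _ ih _ (hg _)
  refine ⟨F, hF, fun n => hl _ (hF n) _ (hg _), fun n => ?_⟩
  cases n with
  | zero => exact hl _ (hg 0) _ (hg 0)
  | succ n => exact hr _ (hF n) _ (hg _)

section Arctan

open Real

lemma norm_arctan_le (x : ℝ) : ‖arctan x‖ ≤ π / 2 :=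
  abs_le.2 ⟨(neg_pi_div_two_lt_arctan x).le, (arctan_lt_pi_div_two x).le⟩

variable [IsFiniteMeasure μ]

lemma integrable_arctan_comp {f : Ω → ℝ} (hf : AEMeasurable f μ) :
    Integrable (fun ω => arctan (f ω)) μ :=
  (integrable_const (π / 2)).mono'
    (continuous_arctan.comp_aestronglyMeasurable hf.aestronglyMeasurable)
    (.of_forall fun ω => norm_arctan_le (f ω))

lemma integral_arctan_comp_mono {f g : Ω → ℝ} (hf : AEMeasurable f μ) (hg : AEMeasurable g μ)
    (h : f ≤ᵐ[μ] g) : ∫ ω, arctan (f ω) ∂μ ≤ ∫ ω, arctan (g ω) ∂μ :=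
  integral_mono_ae (integrable_arctan_comp hf) (integrable_arctan_comp hg)
    (h.mono fun _ h => arctan_strictMono.monotone h)

lemma tendsto_integral_arctan_comp {f : ℕ → Ω → ℝ} {g : Ω → ℝ}
    (hf : ∀ n, AEMeasurable (f n) μ)
    (hlim : ∀ᵐ ω ∂μ, Tendsto (fun n => f n ω) atTop (𝓝 (g ω))) :
    Tendsto (fun n => ∫ ω, arctan (f n ω) ∂μ) atTop (𝓝 (∫ ω, arctan (g ω) ∂μ)) :=
  tendsto_integral_of_dominated_convergence (fun _ => π / 2)
    (fun n => continuous_arctan.comp_aestronglyMeasurable (hf n).aestronglyMeasurable)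
    (integrable_const _) (fun n => .of_forall fun ω => norm_arctan_le (f n ω))
    (hlim.mono fun ω h => (continuous_arctan.tendsto (g ω)).comp h)

lemma ae_le_of_integral_arctan_max_le {f g : Ω → ℝ} (hf : AEMeasurable f μ)
    (hg : AEMeasurable g μ)
    (h : ∫ ω, arctan (max (f ω) (g ω)) ∂μ ≤ ∫ ω, arctan (g ω) ∂μ) : f ≤ᵐ[μ] g := by
  have hle : (fun ω => arctan (g ω)) ≤ᵐ[μ] fun ω => arctan (max (f ω) (g ω)) :=
    .of_forall fun ω => arctan_strictMono.monotone (le_max_right _ _)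
  have heq := (integral_eq_iff_of_ae_le (integrable_arctan_comp hg)
    (integrable_arctan_comp (hf.max hg)) hle).1
    (le_antisymm (integral_arctan_comp_mono hg (hf.max hg)
      (.of_forall fun _ => le_max_right _ _)) h)
  filter_upwards [heq] with ω h
  exact max_eq_right_iff.1 (arctan_injective h.symm)

theorem IsEssSupFam.exists_seq_monotone_tendsto {𝒢 : Set (Ω → ℝ)} {w : Ω → ℝ}
    (hw : IsEssSupFam μ 𝒢 w) (hne : 𝒢.Nonempty) (hmeas : ∀ f ∈ 𝒢, AEMeasurable f μ)
    (hdir : DirectedOn (· ≤ᵐ[μ] ·) 𝒢) :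
    ∃ F : ℕ → Ω → ℝ, (∀ n, F n ∈ 𝒢) ∧
      ∀ᵐ ω ∂μ, Monotone (fun n => F n ω) ∧ Tendsto (fun n => F n ω) atTop (𝓝 (w ω)) := by
  -- `F` maximizes the bounded, strictly monotone functional `I`, so its limit dominates `𝒢`
  set I : (Ω → ℝ) → ℝ := fun f => ∫ ω, arctan (f ω) ∂μ
  have hbdd : BddAbove (I '' 𝒢) := ⟨∫ _, π / 2 ∂μ, forall_mem_image.2 fun f hf =>
    integral_mono (integrable_arctan_comp (hmeas f hf)) (integrable_const _)
      fun ω => (arctan_lt_pi_div_two _).le⟩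
  set s := sSup (I '' 𝒢)
  have happrox : ∀ n : ℕ, ∃ g ∈ 𝒢, s - 1 / (n + 1) < I g := fun n => by
    obtain ⟨_, ⟨g, hg, rfl⟩, hlt⟩ :=
      exists_lt_of_lt_csSup (hne.image I) (sub_lt_self s Nat.one_div_pos_of_nat)
    exact ⟨g, hg, hlt⟩
  choose g hg hgI using happrox
  obtain ⟨F, hF, hFstep, hgF⟩ := hdir.exists_seq_ge hg
  have hFm : ∀ n, AEMeasurable (F n) μ := fun n => hmeas _ (hF n)
  set L : Ω → ℝ := fun ω => ⨆ n, F n ω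
  have hFL : ∀ᵐ ω ∂μ, Monotone (fun n => F n ω) ∧
      Tendsto (fun n => F n ω) atTop (𝓝 (L ω)) ∧ L ω ≤ w ω := by
    filter_upwards [ae_all_iff.2 hFstep, ae_all_iff.2 fun n => hw.1 _ (hF n)] with ω h₁ h₂
    have hmono := monotone_nat_of_le_succ h₁
    exact ⟨hmono, tendsto_atTop_ciSup hmono ⟨w ω, forall_mem_range.2 h₂⟩, ciSup_le h₂⟩
  have hLm : AEMeasurable L μ :=
    aemeasurable_of_tendsto_metrizable_ae' hFm (hFL.mono fun _ h => h.2.1)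
  have hsL : s ≤ I L := by
    have hlower : Tendsto (fun n : ℕ => s - 1 / ((n : ℝ) + 1)) atTop (𝓝 s) := by
      simpa using tendsto_const_nhds.sub (tendsto_one_div_add_atTop_nhds_zero_nat (𝕜 := ℝ))
    refine le_of_tendsto_of_tendsto hlower
      (tendsto_integral_arctan_comp hFm (hFL.mono fun _ h => h.2.1)) (.of_forall fun n => ?_)
    exact (hgI n).le.trans (integral_arctan_comp_mono (hmeas _ (hg n)) (hFm n) (hgF n))
  have hL : ∀ f ∈ 𝒢, f ≤ᵐ[μ] L := fun f hf => by
    refine ae_le_of_integral_arctan_max_le (hmeas f hf) hLm (le_trans ?_ hsL)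
    refine le_of_tendsto (tendsto_integral_arctan_comp (fun n => (hmeas f hf).max (hFm n))
      (hFL.mono fun ω h => tendsto_const_nhds.max h.2.1)) (.of_forall fun n => ?_)
    obtain ⟨h, hh, hfh, hFh⟩ := hdir f hf (F n) (hF n)
    exact (integral_arctan_comp_mono ((hmeas f hf).max (hFm n)) (hmeas h hh)
      (hfh.sup_le hFh)).trans (le_csSup hbdd (mem_image_of_mem I hh))
  refine ⟨F, hF, ?_⟩
  filter_upwards [hFL, hw.2 L hL] with ω h hwL
  exact ⟨h.1, le_antisymm h.2.2 hwL ▸ h.2.1⟩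

end Arctan

section DoubleStopping

variable {𝔈 : FExp μ T ℱ} {X : (Ω → ℝ) → (Ω → ℝ) → Ω → ℝ} {u₁ u₂ : (Ω → ℝ) → Ω → ℝ}

lemma Biadmissible.mem_dom (hX : Biadmissible 𝔈 X) {τ σ : Ω → ℝ} (hτ : Stop0 ℱ T τ)
    (hσ : Stop0 ℱ T σ) : X τ σ ∈ 𝔈.Dom :=
  (hX.1 τ σ hτ hσ).1

lemma Biadmissible.nonneg (hX : Biadmissible 𝔈 X) {τ σ : Ω → ℝ} (hτ : Stop0 ℱ T τ)
    (hσ : Stop0 ℱ T σ) : 0 ≤ᵐ[μ] X τ σ :=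
  (hX.1 τ σ hτ hσ).2.1

lemma Biadmissible.cond_ae_eq_on (hX : Biadmissible 𝔈 X) {τ : Ω → ℝ} (hτ : Stop0 ℱ T τ)
    {A : Set Ω} (hA : MeasurableSet[hτ.1.measurableSpace] A) {ρ σ ρ' σ' : Ω → ℝ}
    (hρ : Stop0 ℱ T ρ) (hσ : Stop0 ℱ T σ) (hρ' : Stop0 ℱ T ρ') (hσ' : Stop0 ℱ T σ')
    (hρA : ∀ ω ∈ A, ρ ω = ρ' ω) (hσA : ∀ ω ∈ A, σ ω = σ' ω) :
    ∀ᵐ ω ∂μ, ω ∈ A → 𝔈.cond τ (X ρ σ) ω = 𝔈.cond τ (X ρ' σ') ω :=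
  𝔈.cond_ae_eq_on hτ hA (hX.mem_dom hρ hσ) (hX.nonneg hρ hσ) (hX.mem_dom hρ' hσ')
    (hX.nonneg hρ' hσ') <| by
      filter_upwards [hX.2 ρ σ ρ' σ' hρ hσ hρ' hσ'] with ω h hω using h (hρA ω hω) (hσA ω hω)

def minPairFamily (𝔈 : FExp μ T ℱ) (X : (Ω → ℝ) → (Ω → ℝ) → Ω → ℝ) (τ : Ω → ℝ) :
    Set (Ω → ℝ) :=
  {g | ∃ ρ σ : Ω → ℝ, IsStopIn ℱ T τ ρ ∧ IsStopIn ℱ T τ σ ∧ (∀ ω, ρ ω = τ ω ∨ σ ω = τ ω) ∧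
    g = 𝔈.cond τ (X ρ σ)}

lemma Biadmissible.measurable_of_mem_minPairFamily (hX : Biadmissible 𝔈 X) {τ g : Ω → ℝ}
    (hτ : Stop0 ℱ T τ) (hg : g ∈ minPairFamily 𝔈 X τ) : Measurable g := by
  obtain ⟨ρ, σ, hρ, hσ, -, rfl⟩ := hg
  exact 𝔈.measurable_cond hτ (hX.mem_dom (hτ.trans hρ) (hτ.trans hσ))
    (hX.nonneg (hτ.trans hρ) (hτ.trans hσ))

lemma Biadmissible.minPairFamily_le_max (hX : Biadmissible 𝔈 X) (hu₁ : IsU1 𝔈 X u₁)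
    (hu₂ : IsU2 𝔈 X u₂) {τ : Ω → ℝ} (hτ : Stop0 ℱ T τ) :
    ∀ g ∈ minPairFamily 𝔈 X τ, g ≤ᵐ[μ] u₁ τ ⊔ u₂ τ := by
  rintro _ ⟨ρ, σ, hρ, hσ, hmin, rfl⟩
  have hρ0 := hτ.trans hρ
  have hσ0 := hτ.trans hσ
  have hA : MeasurableSet[hτ.1.measurableSpace] {ω | τ ω = ρ ω} := by
    simpa using hτ.1.measurableSet_eq_stopping_time hρ0.1
  filter_upwards [hX.cond_ae_eq_on hτ hA hρ0 hσ0 hτ hσ0 (fun _ h => h.symm) (fun _ _ => rfl),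
    hX.cond_ae_eq_on hτ hA.compl hρ0 hσ0 hρ0 hτ (fun _ _ => rfl)
      (fun ω h => (hmin ω).resolve_left (Ne.symm h)),
    (hu₁ τ hτ).1 _ ⟨ρ, hρ, rfl⟩, (hu₂ τ hτ).1 _ ⟨σ, hσ, rfl⟩] with ω h₁ h₂ hu₁ω hu₂ω
  by_cases hω : τ ω = ρ ω
  · rw [h₁ hω]
    exact le_sup_of_le_right hu₂ω
  · rw [h₂ hω]
    exact le_sup_of_le_left hu₁ω

lemma Biadmissible.directedOn_minPairFamily (hX : Biadmissible 𝔈 X) {τ : Ω → ℝ}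
    (hτ : Stop0 ℱ T τ) : DirectedOn (· ≤ᵐ[μ] ·) (minPairFamily 𝔈 X τ) := by
  classical
  rintro _ ⟨ρ, σ, hρ, hσ, hmin, rfl⟩ _ ⟨ρ', σ', hρ', hσ', hmin', rfl⟩
  set B := {ω | 𝔈.cond τ (X ρ' σ') ω ≤ 𝔈.cond τ (X ρ σ) ω}
  have hB : MeasurableSet[hτ.1.measurableSpace] B := measurableSet_le
    (𝔈.cond_adapted hτ (hX.mem_dom (hτ.trans hρ') (hτ.trans hσ'))
      (hX.nonneg (hτ.trans hρ') (hτ.trans hσ')))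
    (𝔈.cond_adapted hτ (hX.mem_dom (hτ.trans hρ) (hτ.trans hσ))
      (hX.nonneg (hτ.trans hρ) (hτ.trans hσ)))
  have hP := IsStopIn.piecewise hτ.1 hρ hρ' hB
  have hQ := IsStopIn.piecewise hτ.1 hσ hσ' hB
  have hon := hX.cond_ae_eq_on hτ hB (hτ.trans hP) (hτ.trans hQ) (hτ.trans hρ) (hτ.trans hσ)
    (fun _ h => piecewise_eq_of_mem _ _ _ h) (fun _ h => piecewise_eq_of_mem _ _ _ h)
  have hoff := hX.cond_ae_eq_on hτ hB.compl (hτ.trans hP) (hτ.trans hQ) (hτ.trans hρ')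
    (hτ.trans hσ') (fun _ h => piecewise_eq_of_notMem _ _ _ h)
    (fun _ h => piecewise_eq_of_notMem _ _ _ h)
  refine ⟨_, ⟨_, _, hP, hQ, fun ω => ?_, rfl⟩, ?_, ?_⟩
  · by_cases hω : ω ∈ B
    · simpa [hω] using hmin ω
    · simpa [hω] using hmin' ω
  · filter_upwards [hon, hoff] with ω h₁ h₂
    by_cases hω : ω ∈ B
    · exact (h₁ hω).ge
    · exact (h₂ hω).symm ▸ (not_le.1 hω).le
  · filter_upwards [hon, hoff] with ω h₁ h₂
    by_cases hω : ω ∈ B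
    · exact (h₁ hω).symm ▸ hω
    · exact (h₂ hω).ge

lemma Biadmissible.isEssSupFam_minPairFamily (hX : Biadmissible 𝔈 X) (hu₁ : IsU1 𝔈 X u₁)
    (hu₂ : IsU2 𝔈 X u₂) {τ : Ω → ℝ} (hτ : Stop0 ℱ T τ) :
    IsEssSupFam μ (minPairFamily 𝔈 X τ) (u₁ τ ⊔ u₂ τ) := by
  refine ⟨hX.minPairFamily_le_max hu₁ hu₂ hτ, fun h hh => ?_⟩
  have h₁ : u₁ τ ≤ᵐ[μ] h := (hu₁ τ hτ).2 h <| by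
    rintro _ ⟨ρ, hρ, rfl⟩
    exact hh _ ⟨ρ, τ, hρ, hτ.isStopIn_self, fun _ => Or.inr rfl, rfl⟩
  have h₂ : u₂ τ ≤ᵐ[μ] h := (hu₂ τ hτ).2 h <| by
    rintro _ ⟨σ, hσ, rfl⟩
    exact hh _ ⟨τ, σ, hτ.isStopIn_self, hσ, fun _ => Or.inl rfl, rfl⟩
  exact h₁.sup_le h₂

lemma Biadmissible.exists_seq_tendsto_max [IsFiniteMeasure μ] (hX : Biadmissible 𝔈 X)
    (hu₁ : IsU1 𝔈 X u₁) (hu₂ : IsU2 𝔈 X u₂) {τ : Ω → ℝ} (hτ : Stop0 ℱ T τ) :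
    ∃ P Q : ℕ → Ω → ℝ, (∀ n, IsStopIn ℱ T τ (P n)) ∧ (∀ n, IsStopIn ℱ T τ (Q n)) ∧
      ∀ᵐ ω ∂μ, Monotone (fun n => 𝔈.cond τ (X (P n) (Q n)) ω) ∧
        Tendsto (fun n => 𝔈.cond τ (X (P n) (Q n)) ω) atTop (𝓝 ((u₁ τ ⊔ u₂ τ) ω)) := by
  have hne : (minPairFamily 𝔈 X τ).Nonempty :=
    ⟨_, τ, τ, hτ.isStopIn_self, hτ.isStopIn_self, fun _ => Or.inl rfl, rfl⟩
  obtain ⟨F, hF, hconv⟩ := (hX.isEssSupFam_minPairFamily hu₁ hu₂ hτ).exists_seq_monotone_tendsto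
    hne (fun _ hg => (hX.measurable_of_mem_minPairFamily hτ hg).aemeasurable)
    (hX.directedOn_minPairFamily hτ)
  choose P Q hP hQ _ hFPQ using hF
  refine ⟨P, Q, hP, hQ, ?_⟩
  simpa only [← hFPQ] using hconv

lemma Biadmissible.max_nonneg (hX : Biadmissible 𝔈 X) (hu₁ : IsU1 𝔈 X u₁) {τ : Ω → ℝ}
    (hτ : Stop0 ℱ T τ) : 0 ≤ᵐ[μ] u₁ τ ⊔ u₂ τ := by
  filter_upwards [(hu₁ τ hτ).1 _ ⟨τ, hτ.isStopIn_self, rfl⟩,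
    𝔈.cond_nonneg hτ (hX.mem_dom hτ hτ) (hX.nonneg hτ hτ)] with ω h₁ h₀
  exact le_sup_of_le_left (h₀.trans h₁)

variable [IsFiniteMeasure μ] [NeZero μ]

lemma Biadmissible.max_mem_dom (hT : 0 ≤ T) (hX : Biadmissible 𝔈 X) (hbdd : BddReward2E0 𝔈 X)
    (hu₁ : IsU1 𝔈 X u₁) (hu₂ : IsU2 𝔈 X u₂) {τ : Ω → ℝ} (hτ : Stop0 ℱ T τ) :
    u₁ τ ⊔ u₂ τ ∈ 𝔈.Dom := by
  obtain ⟨C, hC⟩ := hbdd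
  obtain ⟨P, Q, hP, hQ, hconv⟩ := hX.exists_seq_tendsto_max hu₁ hu₂ hτ
  have hP0 : ∀ n, Stop0 ℱ T (P n) := fun n => hτ.trans (hP n)
  have hQ0 : ∀ n, Stop0 ℱ T (Q n) := fun n => hτ.trans (hQ n)
  have hdom := fun n => hX.mem_dom (hP0 n) (hQ0 n)
  have hnn := fun n => hX.nonneg (hP0 n) (hQ0 n)
  refine 𝔈.h5 (fun n => 𝔈.cond_mem hτ (hdom n) (hnn n)) (fun n => 𝔈.cond_nonneg hτ (hdom n) (hnn n))
    (hconv.mono fun _ h => h.2) ⟨C, .of_forall fun n => ?_⟩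
  rw [𝔈.E0_cond hT hτ (hdom n) (hnn n)]
  exact hC _ _ (hP0 n) (hQ0 n)

lemma Biadmissible.cond_max_le_value (hT : 0 ≤ T) (hX : Biadmissible 𝔈 X)
    (hbdd : BddReward2E0 𝔈 X) {v : (Ω → ℝ) → Ω → ℝ} (hv : IsValueFam2 𝔈 X v)
    (hu₁ : IsU1 𝔈 X u₁) (hu₂ : IsU2 𝔈 X u₂) {S τ : Ω → ℝ} (hS : Stop0 ℱ T S)
    (hτ : IsStopIn ℱ T S τ) : 𝔈.cond S (u₁ τ ⊔ u₂ τ) ≤ᵐ[μ] v S := by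
  have hτ0 := hS.trans hτ
  obtain ⟨P, Q, hP, hQ, hconv⟩ := hX.exists_seq_tendsto_max hu₁ hu₂ hτ0
  have hP0 : ∀ n, Stop0 ℱ T (P n) := fun n => hτ0.trans (hP n)
  have hQ0 : ∀ n, Stop0 ℱ T (Q n) := fun n => hτ0.trans (hQ n)
  have hdom := fun n => hX.mem_dom (hP0 n) (hQ0 n)
  have hnn := fun n => hX.nonneg (hP0 n) (hQ0 n)
  have hlim := 𝔈.cond_tendsto_of_monotone hT hS (fun n => 𝔈.cond_mem hτ0 (hdom n) (hnn n))
    (fun n => 𝔈.cond_nonneg hτ0 (hdom n) (hnn n)) (fun n => 𝔈.measurable_cond hτ0 (hdom n) (hnn n))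
    (hX.max_mem_dom hT hbdd hu₁ hu₂ hτ0) (hX.max_nonneg hu₁ hτ0) hconv
  have hle : ∀ n, ∀ᵐ ω ∂μ, 𝔈.cond S (𝔈.cond τ (X (P n) (Q n))) ω ≤ v S ω := fun n => by
    filter_upwards [𝔈.time_consistent hS hτ0 hτ.2.1 (hdom n) (hnn n),
      (hv S hS).1 _ ⟨P n, Q n, hτ.trans (hP n), hτ.trans (hQ n), rfl⟩] with ω h₁ h₂
    exact h₁ ▸ h₂
  filter_upwards [hlim, ae_all_iff.2 hle] with ω h₁ h₂ using le_of_tendsto' h₁ h₂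

lemma Biadmissible.cond_le_cond_max_min (hT : 0 ≤ T) (hX : Biadmissible 𝔈 X)
    (hbdd : BddReward2E0 𝔈 X) (hu₁ : IsU1 𝔈 X u₁) (hu₂ : IsU2 𝔈 X u₂) {S τ₁ τ₂ : Ω → ℝ}
    (hS : Stop0 ℱ T S) (h₁ : IsStopIn ℱ T S τ₁) (h₂ : IsStopIn ℱ T S τ₂) :
    𝔈.cond S (X τ₁ τ₂) ≤ᵐ[μ]
      𝔈.cond S (u₁ (fun ω => min (τ₁ ω) (τ₂ ω)) ⊔ u₂ (fun ω => min (τ₁ ω) (τ₂ ω))) := by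
  set θ : Ω → ℝ := fun ω => min (τ₁ ω) (τ₂ ω)
  have hθ0 := hS.trans (h₁.min h₂)
  have hτ₁ := hS.trans h₁
  have hτ₂ := hS.trans h₂
  have hmem : 𝔈.cond θ (X τ₁ τ₂) ∈ minPairFamily 𝔈 X θ :=
    ⟨τ₁, τ₂, ⟨hτ₁.1, fun _ => min_le_left _ _, hτ₁.2.2⟩,
      ⟨hτ₂.1, fun _ => min_le_right _ _, hτ₂.2.2⟩,
      fun ω => (min_choice (τ₁ ω) (τ₂ ω)).imp Eq.symm Eq.symm, rfl⟩
  exact (𝔈.time_consistent hS hθ0 (h₁.min h₂).2.1 (hX.mem_dom hτ₁ hτ₂)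
    (hX.nonneg hτ₁ hτ₂)).symm.trans_le <| 𝔈.mono hS (𝔈.cond_mem hθ0 (hX.mem_dom hτ₁ hτ₂)
      (hX.nonneg hτ₁ hτ₂)) (𝔈.cond_nonneg hθ0 (hX.mem_dom hτ₁ hτ₂) (hX.nonneg hτ₁ hτ₂))
      (hX.max_mem_dom hT hbdd hu₁ hu₂ hθ0) (hX.max_nonneg hu₁ hθ0)
      (hX.minPairFamily_le_max hu₁ hu₂ hθ0 _ hmem)

end DoubleStopping

/-- reduction of the double stopping problem to a single stopping
problem: `v(S) = u(S)` a.s. -/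
theorem double_eq_single [IsProbabilityMeasure μ] (hT : 0 < T) (𝔈 : FExp μ T ℱ)
    (X : (Ω → ℝ) → (Ω → ℝ) → Ω → ℝ) (hX : Biadmissible 𝔈 X)
    (hbdd : BddReward2E0 𝔈 X)
    (v u₁ u₂ Xt u : (Ω → ℝ) → Ω → ℝ)
    (hv : IsValueFam2 𝔈 X v) (hu₁ : IsU1 𝔈 X u₁) (hu₂ : IsU2 𝔈 X u₂)
    (hXt : ∀ θ : Ω → ℝ, Xt θ = fun ω => max (u₁ θ ω) (u₂ θ ω))
    (hu : IsValueFam 𝔈 Xt u) :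
    ∀ S : Ω → ℝ, Stop0 ℱ T S → v S =ᵐ[μ] u S := by
  obtain rfl : Xt = fun θ => u₁ θ ⊔ u₂ θ := funext hXt
  intro S hS
  refine ((hv S hS).2 _ ?_).antisymm ((hu S hS).2 _ ?_)
  · rintro _ ⟨τ₁, τ₂, h₁, h₂, rfl⟩
    exact (hX.cond_le_cond_max_min hT.le hbdd hu₁ hu₂ hS h₁ h₂).trans
      ((hu S hS).1 _ ⟨_, h₁.min h₂, rfl⟩)
  · rintro _ ⟨τ, hτ, rfl⟩
    exact hX.cond_max_le_value hT.le hbdd hv hu₁ hu₂ hS hτ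

end OptMultStop
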